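/- arXiv:1809.03048 — 6 statements merged into one kernel-verified Lean document; each statement's English description precedes it below -/
import Mathlib

section
/- Let A ∈ ℝ^{N×N} be symmetric, B ∈ ℝ^{N×m}, and let Q ∈ ℝ^{N×s} have orthonormal columns (QᵀQ = I) such that the column span of Q contains the columns of A^j B for every j = 0,1,…,k−1. Then for every integer p with 0 ≤ p ≤ 2k−1, Bᵀ A^p B = (Qᵀ B)ᵀ (Qᵀ A Q)^p (Qᵀ B). -/
open Matrix

/-- Moment matching of Galerkin projection onto a block Krylov subspace:
if the column span of `Q` (orthonormal columns) contains the columns of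
`A^j B` for `j = 0, …, k-1`, then `Bᵀ A^p B` is matched by the projected
matrix for all `0 ≤ p ≤ 2k-1`. -/
theorem krylov_moment_matching {N m s k : ℕ}
    (A : Matrix (Fin N) (Fin N) ℝ) (hA : A.IsSymm)
    (B : Matrix (Fin N) (Fin m) ℝ) (Q : Matrix (Fin N) (Fin s) ℝ)
    (hQ : Qᵀ * Q = 1)
    (hKrylov : ∀ j < k, ∃ C : Matrix (Fin s) (Fin m) ℝ, A ^ j * B = Q * C) :
    ∀ p < 2 * k,
      Bᵀ * A ^ p * B = (Qᵀ * B)ᵀ * (Qᵀ * A * Q) ^ p * (Qᵀ * B) := by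
  have hAt : Aᵀ = A := hA
  set M := Qᵀ * A * Q with hM
  have hMt : Mᵀ = M := by
    rw [hM]; simp [Matrix.transpose_mul, hAt, Matrix.mul_assoc]
  have hproj : ∀ j < k, Q * (Qᵀ * (A ^ j * B)) = A ^ j * B := by
    intro j hj
    obtain ⟨C, hC⟩ := hKrylov j hj
    rw [hC, ← Matrix.mul_assoc Qᵀ Q C, hQ, Matrix.one_mul]
  have hL : ∀ j < k, M ^ j * (Qᵀ * B) = Qᵀ * (A ^ j * B) := by
    intro j hj
    induction j with
    | zero => simp
    | succ n ih =>
      have hn : n < k := Nat.lt_of_succ_lt hj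
      rw [pow_succ', Matrix.mul_assoc, ih hn, hM,
        Matrix.mul_assoc (Qᵀ * A) Q _, hproj n hn,
        Matrix.mul_assoc Qᵀ A _, ← Matrix.mul_assoc A (A ^ n) B, ← pow_succ']
  have hAp : ∀ i : ℕ, (A ^ i)ᵀ = A ^ i := by
    intro i; rw [Matrix.transpose_pow, hAt]
  have hMp : ∀ i : ℕ, (M ^ i)ᵀ = M ^ i := by
    intro i; rw [Matrix.transpose_pow, hMt]
  have hLt : ∀ j < k, (Qᵀ * B)ᵀ * M ^ j = (Qᵀ * (A ^ j * B))ᵀ := by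
    intro j hj
    rw [← hL j hj, Matrix.transpose_mul (M ^ j) (Qᵀ * B), hMp]
  have key : ∀ i j, i < k → j < k →
      Bᵀ * A ^ (i + j) * B = (Qᵀ * B)ᵀ * M ^ (i + j) * (Qᵀ * B) := by
    intro i j hi hj
    have lhs : Bᵀ * A ^ (i + j) * B = (Qᵀ * (A ^ i * B))ᵀ * (Qᵀ * (A ^ j * B)) := by
      rw [pow_add]
      calc Bᵀ * (A ^ i * A ^ j) * B
          = (A ^ i * B)ᵀ * (A ^ j * B) := by
            rw [Matrix.transpose_mul, hAp]; simp only [Matrix.mul_assoc]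
        _ = (Q * (Qᵀ * (A ^ i * B)))ᵀ * (Q * (Qᵀ * (A ^ j * B))) := by
            rw [hproj i hi, hproj j hj]
        _ = (Qᵀ * (A ^ i * B))ᵀ * ((Qᵀ * Q) * (Qᵀ * (A ^ j * B))) := by
            rw [Matrix.transpose_mul]; simp only [Matrix.mul_assoc]
        _ = (Qᵀ * (A ^ i * B))ᵀ * (Qᵀ * (A ^ j * B)) := by
            rw [hQ, Matrix.one_mul]
    rw [lhs, pow_add, ← Matrix.mul_assoc ((Qᵀ * B)ᵀ) (M ^ i) (M ^ j), hLt i hi,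
      Matrix.mul_assoc, hL j hj]
  intro p hp
  rcases Nat.lt_or_ge p k with h | h
  · have := key p 0 h (by omega)
    simpa using this
  · rcases Nat.lt_or_ge p (2 * k - 1) with h2 | h2
    · have hsplit : p = (k - 1) + (p - (k - 1)) := by omega
      rw [hsplit]; exact key _ _ (by omega) (by omega)
    · -- p = 2k - 1
      have hpe : p = (k - 1) + 1 + (k - 1) := by omega
      have hk1 : k - 1 < k := by omega
      have hD := hproj _ hk1
      have hL1 := hL _ hk1
      have hLt1 := hLt _ hk1
      set E := Qᵀ * (A ^ (k - 1) * B) with hE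
      have lhs : Bᵀ * A ^ p * B = Eᵀ * M * E := by
        have h1 : A ^ p * B = A ^ (k-1) * (A * (A ^ (k-1) * B)) := by
          rw [hpe, pow_add, pow_add, pow_one]; simp only [Matrix.mul_assoc]
        rw [Matrix.mul_assoc, h1, ← hD]
        have h2 : Bᵀ * (A ^ (k-1) * (A * (Q * E)))
            = (A ^ (k-1) * B)ᵀ * (A * (Q * E)) := by
          rw [Matrix.transpose_mul, hAp]; simp only [Matrix.mul_assoc]
        rw [h2, ← hD, Matrix.transpose_mul, hM]
        simp only [Matrix.mul_assoc]
      rw [lhs, hpe, pow_add, pow_add, pow_one,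
        ← Matrix.mul_assoc ((Qᵀ * B)ᵀ) (M ^ (k-1) * M) (M ^ (k-1)),
        ← Matrix.mul_assoc ((Qᵀ * B)ᵀ) (M ^ (k-1)) M,
        hLt1, Matrix.mul_assoc (Eᵀ * M) (M ^ (k-1)) (Qᵀ * B), hL1]
end

section
/- Let A ∈ ℝ^{N×N} be symmetric positive definite, B ∈ ℝ^{N×m}, and let Q ∈ ℝ^{N×s} have orthonormal columns (QᵀQ = I) such that the column span of Q contains the columns of A^{−j} B for every j = 0,1,…,k−1. Then Qᵀ A Q is symmetric positive definite, and for every integer i with 0 ≤ i ≤ 2k−2, Bᵀ A^{−i} B = (Qᵀ B)ᵀ (Qᵀ A Q)^{−i} (Qᵀ B). -/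
/-!
With `T = Qᵀ A Q`, an induction on `j` shows that the Krylov blocks are reproduced by the
projected problem: `A⁻ʲ B = Q T⁻ʲ Qᵀ B` for `j < k`. Since `A⁻¹` and `T⁻¹` are symmetric,
a moment of order `i = p + q` with `p, q < k` factors as `(A⁻ᵖ B)ᵀ (A⁻ᵠ B)`, and `Qᵀ Q = 1`
turns this into the corresponding moment of `T`.
-/

open Matrix

namespace Matrix

variable {n ι μ K : Type*} [Fintype n] [Fintype ι]

theorem transpose_mul_pow_add_mul [DecidableEq n] [CommSemiring K] {M : Matrix n n K}
    (hM : M.IsSymm) (B : Matrix n μ K) (p q : ℕ) :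
    Bᵀ * M ^ (p + q) * B = (M ^ p * B)ᵀ * (M ^ q * B) := by
  rw [transpose_mul, (hM.pow p).eq, pow_add, Matrix.mul_assoc, Matrix.mul_assoc,
    Matrix.mul_assoc]

theorem PosDef.transpose_mul_mul_of_transpose_mul_eq_one [DecidableEq ι] {A : Matrix n n ℝ}
    (hA : A.PosDef) {Q : Matrix n ι ℝ} (hQ : Qᵀ * Q = 1) : (Qᵀ * A * Q).PosDef := by
  have hinj : Function.Injective Q.mulVec :=
    Function.LeftInverse.injective (g := Qᵀ.mulVec) fun x => by
      rw [mulVec_mulVec, hQ, one_mulVec]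
  simpa only [conjTranspose_eq_transpose_of_trivial] using hA.conjTranspose_mul_mul_same hinj

theorem inv_pow_mul_eq_galerkin_of_krylov [DecidableEq n] [DecidableEq ι] [Field K]
    {A : Matrix n n K} (hA : IsUnit A.det) {P : Matrix ι n K} {Q : Matrix n ι K}
    (hPQ : P * Q = 1) (hT : IsUnit (P * A * Q).det)
    {B : Matrix n μ K} {k : ℕ} (hKrylov : ∀ j < k, ∃ C : Matrix ι μ K, A⁻¹ ^ j * B = Q * C) :
    ∀ j < k, A⁻¹ ^ j * B = Q * ((P * A * Q)⁻¹ ^ j * (P * B)) := by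
  set T := P * A * Q
  have hPQC (C : Matrix ι μ K) : P * (Q * C) = C := by
    rw [← Matrix.mul_assoc, hPQ, Matrix.one_mul]
  intro j hj
  obtain ⟨C, hC⟩ := hKrylov j hj
  induction j generalizing C with
  | zero =>
    simp only [pow_zero, Matrix.one_mul] at hC ⊢
    rw [hC, hPQC]
  | succ j ih =>
    have hAC : A * (Q * C) = A⁻¹ ^ j * B := by
      rw [← hC, pow_succ', Matrix.mul_assoc, ← Matrix.mul_assoc A, mul_nonsing_inv _ hA,
        Matrix.one_mul]
    obtain ⟨C', hC'⟩ := hKrylov j (by omega)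
    have hTC : T * C = T⁻¹ ^ j * (P * B) := by
      rw [← hPQC (T⁻¹ ^ j * (P * B)), ← ih (by omega) C' hC', ← hAC]
      simp only [T, Matrix.mul_assoc]
    rw [hC, pow_succ', Matrix.mul_assoc T⁻¹, ← hTC, ← Matrix.mul_assoc T⁻¹,
      nonsing_inv_mul _ hT, Matrix.one_mul]

end Matrix

/-- Padé–Lanczos moment matching at λ = 0: if the column span of `Q`
(orthonormal columns) contains the columns of `A⁻ʲ B` for `j = 0, …, k-1`,
with `A` symmetric positive definite, then `Qᵀ A Q` is positive definite and
the negative moments `Bᵀ A^{-i} B` are matched for `0 ≤ i ≤ 2k-2`. -/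
theorem krylov_inverse_moment_matching {N m s k : ℕ}
    (A : Matrix (Fin N) (Fin N) ℝ) (hA : A.PosDef)
    (B : Matrix (Fin N) (Fin m) ℝ) (Q : Matrix (Fin N) (Fin s) ℝ)
    (hQ : Qᵀ * Q = 1)
    (hKrylov : ∀ j < k, ∃ C : Matrix (Fin s) (Fin m) ℝ, (A⁻¹) ^ j * B = Q * C) :
    (Qᵀ * A * Q).PosDef ∧
      ∀ i : ℕ, i + 1 < 2 * k →
        Bᵀ * (A⁻¹) ^ i * B = (Qᵀ * B)ᵀ * ((Qᵀ * A * Q)⁻¹) ^ i * (Qᵀ * B) := by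
  have hT := hA.transpose_mul_mul_of_transpose_mul_eq_one hQ
  refine ⟨hT, fun i hi => ?_⟩
  have hKrylovT :=
    inv_pow_mul_eq_galerkin_of_krylov hA.det_pos.ne'.isUnit hQ hT.det_pos.ne'.isUnit hKrylov
  obtain ⟨p, q, hp, hq, rfl⟩ : ∃ p q, p < k ∧ q < k ∧ i = p + q :=
    ⟨min i (k - 1), i - min i (k - 1), by omega, by omega, by omega⟩
  have hAsymm : A.IsSymm := isHermitian_iff_isSymm.mp hA.isHermitian
  have hTsymm : (Qᵀ * A * Q).IsSymm := isHermitian_iff_isSymm.mp hT.isHermitian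
  rw [transpose_mul_pow_add_mul hAsymm.inv, transpose_mul_pow_add_mul hTsymm.inv,
    hKrylovT p hp, hKrylovT q hq, transpose_mul, Matrix.mul_assoc, ← Matrix.mul_assoc Qᵀ, hQ,
    Matrix.one_mul]
end

section
/- Let A ∈ ℝ^{N×N} be symmetric positive semidefinite, let Z ∈ ℝ^{N×m₀} satisfy A Z = 0 and Zᵀ Z = I, and let Q ∈ ℝ^{N×s} satisfy Qᵀ Q = I, Qᵀ Z = 0, and (column span of Q) ∩ (nullspace of A) = {0}. Then the nullspace of the (s+m₀)×(s+m₀) matrix [Q, Z]ᵀ A [Q, Z] has dimension exactly m₀. -/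
/-!
Since `A` is positive semidefinite, `Bᴴ A B v = 0` forces `(Bv)ᴴ A (Bv) = 0` and hence `A B v = 0`,
so the nullspace of `[Q, Z]ᵀ A [Q, Z]` is that of `A [Q, Z] = [A Q, 0]`. The trivial intersection
of `range Q` with `ker A`, together with the injectivity of `Q`, makes `A Q` injective, so this
nullspace consists of the vectors whose `Q`-block vanishes: a copy of `ℝ^{m₀}`.
-/

open Matrix
open scoped ComplexOrder

namespace Matrix

theorem PosSemidef.ker_conjTranspose_mul_mul {𝕜 m n : Type*} [RCLike 𝕜] [Fintype m] [Fintype n]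
    {A : Matrix n n 𝕜} (hA : A.PosSemidef) (B : Matrix n m 𝕜) :
    LinearMap.ker (Bᴴ * A * B).mulVecLin = LinearMap.ker (A * B).mulVecLin := by
  ext v
  simp only [LinearMap.mem_ker, mulVecLin_apply]
  constructor
  · intro hv
    have hquad : star (B *ᵥ v) ⬝ᵥ A *ᵥ (B *ᵥ v) = 0 := by
      rw [star_mulVec, ← dotProduct_mulVec, mulVec_mulVec, mulVec_mulVec, hv, dotProduct_zero]
    rw [← mulVec_mulVec]
    exact (hA.dotProduct_mulVec_zero_iff _).mp hquad
  · intro hv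
    rw [Matrix.mul_assoc, ← mulVec_mulVec, hv, mulVec_zero]

theorem ker_fromCols_zero_mulVecLin {R m n₁ n₂ : Type*} [CommRing R] [Fintype n₁] [Fintype n₂]
    {C : Matrix m n₁ R} (hC : Function.Injective C.mulVec) :
    LinearMap.ker (fromCols C (0 : Matrix m n₂ R)).mulVecLin
      = LinearMap.ker (LinearMap.funLeft R R (Sum.inl : n₁ → n₁ ⊕ n₂)) := by
  ext v
  simp only [LinearMap.mem_ker, mulVecLin_apply, fromCols_mulVec, zero_mulVec, add_zero]
  exact hC.eq_iff' (mulVec_zero C)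

end Matrix

theorem LinearMap.finrank_ker_funLeft_inl {K ι κ : Type*} [Field K] [Fintype ι] [Fintype κ] :
    Module.finrank K (ker (funLeft K K (Sum.inl : ι → ι ⊕ κ)))
      = Fintype.card κ := by
  have hsurj := funLeft_surjective_of_injective K K _ (Sum.inl_injective (α := ι) (β := κ))
  have hrank := finrank_range_add_finrank_ker (funLeft K K (Sum.inl : ι → ι ⊕ κ))
  rw [range_eq_top.mpr hsurj, finrank_top, Module.finrank_fintype_fun_eq_card,
    Module.finrank_fintype_fun_eq_card, Fintype.card_sum] at hrank
  omega

theorem projected_nullspace_dimension_general {N s m₀ : ℕ}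
    (A : Matrix (Fin N) (Fin N) ℝ) (hA : A.PosSemidef)
    (Z : Matrix (Fin N) (Fin m₀) ℝ) (hAZ : A * Z = 0)
    (Q : Matrix (Fin N) (Fin s) ℝ) (hQ : Qᵀ * Q = 1)
    (hinter : ∀ x : Fin s → ℝ, A.mulVec (Q.mulVec x) = 0 → Q.mulVec x = 0) :
    Module.finrank ℝ
      (LinearMap.ker
        ((Matrix.fromCols Q Z)ᵀ * A * Matrix.fromCols Q Z).mulVecLin) = m₀ := by
  have hAQ : Function.Injective (A * Q).mulVec := by
    refine (injective_iff_map_eq_zero (A * Q).mulVecLin).mpr fun x hx => ?_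
    have hQx : Q *ᵥ x = 0 := hinter x (by rwa [mulVec_mulVec])
    rw [← one_mulVec x, ← hQ, ← mulVec_mulVec, hQx, mulVec_zero]
  rw [← conjTranspose_eq_transpose_of_trivial, hA.ker_conjTranspose_mul_mul, mul_fromCols, hAZ,
    ker_fromCols_zero_mulVecLin hAQ, LinearMap.finrank_ker_funLeft_inl, Fintype.card_fin]

/-- Assumption 1 realized: if `Z` spans an orthonormal piece of the nullspace of
a PSD matrix `A`, `Q` has orthonormal columns orthogonal to `Z` whose span meets
the nullspace of `A` trivially, then the nullspace of `[Q,Z]ᵀ A [Q,Z]` has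
dimension exactly `m₀`. -/
theorem projected_nullspace_dimension {N s m₀ : ℕ}
    (A : Matrix (Fin N) (Fin N) ℝ) (hA : A.PosSemidef)
    (Z : Matrix (Fin N) (Fin m₀) ℝ) (hAZ : A * Z = 0) (hZ : Zᵀ * Z = 1)
    (Q : Matrix (Fin N) (Fin s) ℝ) (hQ : Qᵀ * Q = 1) (hQZ : Qᵀ * Z = 0)
    (hinter : ∀ x : Fin s → ℝ, A.mulVec (Q.mulVec x) = 0 → Q.mulVec x = 0) :
    Module.finrank ℝ
      (LinearMap.ker
        ((Matrix.fromCols Q Z)ᵀ * A * Matrix.fromCols Q Z).mulVecLin) = m₀ :=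
  projected_nullspace_dimension_general A hA Z hAZ Q hQ hinter
end

section
/- Let D ∈ ℝ^{N×N} be diagonal with positive diagonal entries, let i₁ < … < i_m be indices and B = [e_{i₁},…,e_{i_m}] ∈ ℝ^{N×m} the corresponding indicator matrix. Let Q ∈ ℝ^{N×n} satisfy Qᵀ Q = I and Q Qᵀ D^{1/2} B = D^{1/2} B (every column of D^{1/2}B lies in the column span of Q). Let Q̃ ∈ ℝ^{n×n} be orthogonal with Q̃ E₁ = Qᵀ D^{1/2} B D̂^{−1/2}, where E₁ consists of the first m columns of the n×n identity and D̂ = Bᵀ D B. Then the vector z̃₀ = Q̃ᵀ Qᵀ D^{1/2} 𝟙 satisfies E₁ᵀ z̃₀ = Bᵀ D^{1/2} 𝟙, i.e., its first m entries equal (√D_{i₁ i₁}, …, √D_{i_m i_m}). -/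
open Matrix

/-- The chain of identities (40): the vector `z̃₀ = Q̃ᵀ Qᵀ D^{1/2} 𝟙` has its
first `m` entries equal to `Bᵀ D^{1/2} 𝟙 = (√D_{i₁i₁}, …, √D_{iₘiₘ})`. -/
theorem z0_first_entries_match {N m n : ℕ} (hmn : m ≤ n)
    (d : Fin N → ℝ) (hd : ∀ i, 0 < d i)
    (idx : Fin m → Fin N) (hidx : StrictMono idx)
    (Q : Matrix (Fin N) (Fin n) ℝ) (Qt : Matrix (Fin n) (Fin n) ℝ)
    (hQ : Qᵀ * Q = 1) (hQt : Qtᵀ * Qt = 1)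
    (hspan : Q * Qᵀ * (Matrix.diagonal fun i => Real.sqrt (d i)) *
        (Matrix.of fun a b => if a = idx b then (1 : ℝ) else 0) =
      (Matrix.diagonal fun i => Real.sqrt (d i)) *
        (Matrix.of fun a b => if a = idx b then (1 : ℝ) else 0))
    (hQtE : Qt * (Matrix.of fun (a : Fin n) (b : Fin m) =>
          if (a : ℕ) = (b : ℕ) then (1 : ℝ) else 0) =
      Qᵀ * (Matrix.diagonal fun i => Real.sqrt (d i)) *
        (Matrix.of fun a b => if a = idx b then (1 : ℝ) else 0) *
        Matrix.diagonal (fun b => (Real.sqrt (d (idx b)))⁻¹)) :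
    (Matrix.of fun (a : Fin n) (b : Fin m) =>
        if (a : ℕ) = (b : ℕ) then (1 : ℝ) else 0)ᵀ.mulVec
      (Qtᵀ.mulVec (Qᵀ.mulVec
        ((Matrix.diagonal fun i => Real.sqrt (d i)).mulVec fun _ => 1))) =
    (Matrix.of fun a b => if a = idx b then (1 : ℝ) else 0)ᵀ.mulVec
        ((Matrix.diagonal fun i => Real.sqrt (d i)).mulVec fun _ => 1) ∧
    ∀ b : Fin m,
      ((Matrix.of fun (a : Fin n) (b : Fin m) =>
          if (a : ℕ) = (b : ℕ) then (1 : ℝ) else 0)ᵀ.mulVec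
        (Qtᵀ.mulVec (Qᵀ.mulVec
          ((Matrix.diagonal fun i => Real.sqrt (d i)).mulVec fun _ => 1)))) b =
      Real.sqrt (d (idx b)) := by
  set S : Matrix (Fin N) (Fin N) ℝ := Matrix.diagonal fun i => Real.sqrt (d i) with hS
  set B : Matrix (Fin N) (Fin m) ℝ :=
    Matrix.of fun a b => if a = idx b then (1 : ℝ) else 0 with hB
  set E : Matrix (Fin n) (Fin m) ℝ :=
    Matrix.of fun (a : Fin n) (b : Fin m) =>
      if (a : ℕ) = (b : ℕ) then (1 : ℝ) else 0 with hE
  set Dinv : Matrix (Fin m) (Fin m) ℝ :=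
    Matrix.diagonal (fun b => (Real.sqrt (d (idx b)))⁻¹) with hDinv
  have hSt : Sᵀ = S := by rw [hS, Matrix.diagonal_transpose]
  have hDt : Dinvᵀ = Dinv := by rw [hDinv, Matrix.diagonal_transpose]
  have h1 : Eᵀ * Qtᵀ = Dinv * (Bᵀ * (S * Q)) := by
    have := congrArg Matrix.transpose hQtE
    simpa [Matrix.transpose_mul, hSt, hDt, Matrix.mul_assoc] using this
  have h2 : Bᵀ * (S * (Q * Qᵀ)) = Bᵀ * S := by
    have := congrArg Matrix.transpose hspan
    simpa [Matrix.transpose_mul, hSt, Matrix.mul_assoc] using this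
  have hkey : Eᵀ * Qtᵀ * Qᵀ * S = Bᵀ * S := by
    calc Eᵀ * Qtᵀ * Qᵀ * S = Dinv * (Bᵀ * (S * (Q * Qᵀ))) * S := by
          rw [h1]; simp only [Matrix.mul_assoc]
      _ = Dinv * (Bᵀ * S) * S := by rw [h2]
      _ = Bᵀ * S := by
          ext b i
          simp only [Matrix.mul_assoc, hS, hB, hDinv, Matrix.diagonal_mul_diagonal,
            Matrix.mul_diagonal, Matrix.diagonal_mul, Matrix.transpose_apply,
            Matrix.of_apply]
          by_cases h : i = idx b
          · subst h
            simp only [if_pos rfl, one_mul, mul_one]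
            rw [← Real.sqrt_mul_self (le_of_lt (hd (idx b)))]
            have hpos : Real.sqrt (d (idx b)) ≠ 0 :=
              ne_of_gt (Real.sqrt_pos.mpr (hd (idx b)))
            field_simp
          · simp [h]
  have hvec : Eᵀ.mulVec (Qtᵀ.mulVec (Qᵀ.mulVec (S.mulVec fun _ => 1)))
      = (Bᵀ * S).mulVec (fun _ => 1) := by
    rw [Matrix.mulVec_mulVec, Matrix.mulVec_mulVec, Matrix.mulVec_mulVec, ← hkey]
  constructor
  · rw [hvec, ← Matrix.mulVec_mulVec]
  · intro b
    rw [hvec]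
    simp only [Matrix.mulVec, dotProduct, Matrix.mul_apply, hB, hS,
      Matrix.mul_diagonal, Matrix.transpose_apply, Matrix.of_apply, mul_one]
    simp [Matrix.diagonal_apply, Finset.sum_ite_eq, Finset.sum_ite_eq']
end

section
/- Let A ∈ ℝ^{N×N} be symmetric, let i₁ < … < i_m be indices and B = [e_{i₁},…,e_{i_m}] ∈ ℝ^{N×m}. Let Q ∈ ℝ^{N×s} have orthonormal columns with Qᵀ B = E₁ (the first m columns of the s×s identity) and suppose the column span of Q contains the columns of A^j B for j = 0,…,k−1. Set Ã = Qᵀ A Q. Then for all positive reals d₁,…,d_m, all j, ℓ ∈ {1,…,m}, and every integer p with 0 ≤ p ≤ k−1: (√d_j e_{i_j} − √d_ℓ e_{i_ℓ})ᵀ (I − A)^{2p} (√d_j e_{i_j} − √d_ℓ e_{i_ℓ}) = (√d_j e_j − √d_ℓ e_ℓ)ᵀ (I − Ã)^{2p} (√d_j e_j − √d_ℓ e_ℓ). -/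
open Matrix

/-- Exact preservation of diffusion distances (Proposition 3.3): if the column
span of `Q` contains the columns of `A^j B` for `j = 0, …, k-1` and `Qᵀ B = E₁`,
then the squared diffusion distances between target-subset vertices are
preserved exactly for all times `p ≤ k-1`. -/
theorem diffusion_distance_preservation {N m s k : ℕ} (hms : m ≤ s)
    (A : Matrix (Fin N) (Fin N) ℝ) (hA : A.IsSymm)
    (idx : Fin m → Fin N) (hidx : StrictMono idx)
    (Q : Matrix (Fin N) (Fin s) ℝ) (hQ : Qᵀ * Q = 1)
    (hQB : Qᵀ * (Matrix.of fun a b => if a = idx b then (1 : ℝ) else 0) =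
      Matrix.of fun (a : Fin s) (b : Fin m) => if (a : ℕ) = (b : ℕ) then 1 else 0)
    (hKrylov : ∀ j < k, ∃ C : Matrix (Fin s) (Fin m) ℝ,
      A ^ j * (Matrix.of fun a b => if a = idx b then (1 : ℝ) else 0) = Q * C) :
    ∀ d : Fin m → ℝ, (∀ b, 0 < d b) → ∀ j ℓ : Fin m, ∀ p < k,
      (Pi.single (idx j) (Real.sqrt (d j)) - Pi.single (idx ℓ) (Real.sqrt (d ℓ))) ⬝ᵥ
        (((1 : Matrix (Fin N) (Fin N) ℝ) - A) ^ (2 * p)).mulVec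
          (Pi.single (idx j) (Real.sqrt (d j)) -
            Pi.single (idx ℓ) (Real.sqrt (d ℓ))) =
      (Pi.single (Fin.castLE hms j) (Real.sqrt (d j)) -
          Pi.single (Fin.castLE hms ℓ) (Real.sqrt (d ℓ))) ⬝ᵥ
        (((1 : Matrix (Fin s) (Fin s) ℝ) - Qᵀ * A * Q) ^ (2 * p)).mulVec
          (Pi.single (Fin.castLE hms j) (Real.sqrt (d j)) -
            Pi.single (Fin.castLE hms ℓ) (Real.sqrt (d ℓ))) := by
  intro d hd j ℓ p hp
  set B : Matrix (Fin N) (Fin m) ℝ :=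
    Matrix.of fun a b => if a = idx b then (1 : ℝ) else 0 with hB
  set E : Matrix (Fin s) (Fin m) ℝ :=
    Matrix.of fun (a : Fin s) (b : Fin m) => if (a : ℕ) = (b : ℕ) then 1 else 0 with hE
  set At : Matrix (Fin s) (Fin s) ℝ := Qᵀ * A * Q with hAt
  -- A^q * B lies in the column span of Q, with coefficient matrix Qᵀ * (A^q * B)
  have hC : ∀ q < k, A ^ q * B = Q * (Qᵀ * (A ^ q * B)) := by
    intro q hq
    obtain ⟨C, hC⟩ := hKrylov q hq
    rw [hC, ← Matrix.mul_assoc Qᵀ Q C, hQ, Matrix.one_mul]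
  -- the reduced powers reproduce the projected Krylov vectors
  have hred : ∀ q ≤ k, Qᵀ * (A ^ q * B) = At ^ q * E := by
    intro q hq
    induction q with
    | zero => simpa using hQB
    | succ q ih =>
      have hqk : q < k := lt_of_lt_of_le (Nat.lt_succ_self q) hq
      have ihq := ih (le_of_lt (lt_of_lt_of_le (Nat.lt_succ_self q) hq))
      calc Qᵀ * (A ^ (q + 1) * B) = Qᵀ * A * (Q * (Qᵀ * (A ^ q * B))) := by
            rw [← hC q hqk, pow_succ']; simp only [Matrix.mul_assoc]
        _ = At * (At ^ q * E) := by rw [← ihq, hAt]; simp only [Matrix.mul_assoc]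
        _ = At ^ (q + 1) * E := by rw [pow_succ']; simp only [Matrix.mul_assoc]
  -- key claim: powers of (1 - A) applied to Krylov vectors
  have key : ∀ p' q, p' + q < k →
      ((1 : Matrix (Fin N) (Fin N) ℝ) - A) ^ p' * (A ^ q * B) =
        Q * (Qᵀ * (((1 : Matrix (Fin N) (Fin N) ℝ) - A) ^ p' * (A ^ q * B))) ∧
      Qᵀ * (((1 : Matrix (Fin N) (Fin N) ℝ) - A) ^ p' * (A ^ q * B)) =
        ((1 : Matrix (Fin s) (Fin s) ℝ) - At) ^ p' * (At ^ q * E) := by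
    intro p'
    induction p' with
    | zero =>
      intro q hq
      simp only [pow_zero, Matrix.one_mul]
      exact ⟨hC q (by omega), hred q (by omega)⟩
    | succ p' ih =>
      intro q hq
      obtain ⟨h1a, h1b⟩ := ih q (by omega)
      obtain ⟨h2a, h2b⟩ := ih (q + 1) (by omega)
      have hrw : ((1 : Matrix (Fin N) (Fin N) ℝ) - A) ^ (p' + 1) * (A ^ q * B) =
          ((1 : Matrix (Fin N) (Fin N) ℝ) - A) ^ p' * (A ^ q * B) -
          ((1 : Matrix (Fin N) (Fin N) ℝ) - A) ^ p' * (A ^ (q + 1) * B) := by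
        rw [pow_succ, pow_succ' A q]
        simp only [Matrix.mul_assoc, Matrix.sub_mul, Matrix.mul_sub, Matrix.one_mul]
      have hrw' : ((1 : Matrix (Fin s) (Fin s) ℝ) - At) ^ (p' + 1) * (At ^ q * E) =
          ((1 : Matrix (Fin s) (Fin s) ℝ) - At) ^ p' * (At ^ q * E) -
          ((1 : Matrix (Fin s) (Fin s) ℝ) - At) ^ p' * (At ^ (q + 1) * E) := by
        rw [pow_succ, pow_succ' At q]
        simp only [Matrix.mul_assoc, Matrix.sub_mul, Matrix.mul_sub, Matrix.one_mul]
      constructor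
      · rw [hrw, Matrix.mul_sub, Matrix.mul_sub, ← h1a, ← h2a]
      · rw [hrw, hrw', Matrix.mul_sub, h1b, h2b]
  obtain ⟨hQD, hD⟩ := key p 0 (by omega)
  simp only [pow_zero, Matrix.one_mul] at hQD hD
  set D : Matrix (Fin s) (Fin m) ℝ :=
    Qᵀ * (((1 : Matrix (Fin N) (Fin N) ℝ) - A) ^ p * B) with hDdef
  -- symmetry facts
  have hsymN : (((1 : Matrix (Fin N) (Fin N) ℝ) - A) ^ p)ᵀ =
      ((1 : Matrix (Fin N) (Fin N) ℝ) - A) ^ p := by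
    rw [transpose_pow]
    congr 1
    exact (Matrix.isSymm_one.sub hA)
  have hAts : Atᵀ = At := by
    rw [hAt, transpose_mul, transpose_mul, transpose_transpose, hA]
    simp only [Matrix.mul_assoc]
  have hsymS : (((1 : Matrix (Fin s) (Fin s) ℝ) - At) ^ p)ᵀ =
      ((1 : Matrix (Fin s) (Fin s) ℝ) - At) ^ p := by
    rw [transpose_pow]
    congr 1
    exact (Matrix.isSymm_one.sub hAts)
  -- reduction of the quadratic form matrix
  have hEeq : ((1 : Matrix (Fin s) (Fin s) ℝ) - At) ^ p * E = D := by
    rw [← hD]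
  have hBMB : Bᵀ * (((1 : Matrix (Fin N) (Fin N) ℝ) - A) ^ (2 * p)) * B =
      Eᵀ * (((1 : Matrix (Fin s) (Fin s) ℝ) - At) ^ (2 * p)) * E := by
    have h2 : 2 * p = p + p := by ring
    rw [h2, pow_add, pow_add]
    calc Bᵀ * (((1 : Matrix (Fin N) (Fin N) ℝ) - A) ^ p *
            ((1 : Matrix (Fin N) (Fin N) ℝ) - A) ^ p) * B
        = (((1 : Matrix (Fin N) (Fin N) ℝ) - A) ^ p * B)ᵀ *
            (((1 : Matrix (Fin N) (Fin N) ℝ) - A) ^ p * B) := by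
          rw [transpose_mul, hsymN]; simp only [Matrix.mul_assoc]
      _ = (Q * D)ᵀ * (Q * D) := by rw [← hQD]
      _ = Dᵀ * (Qᵀ * Q) * D := by rw [transpose_mul]; simp only [Matrix.mul_assoc]
      _ = Dᵀ * D := by rw [hQ, Matrix.mul_one]
      _ = (((1 : Matrix (Fin s) (Fin s) ℝ) - At) ^ p * E)ᵀ *
            (((1 : Matrix (Fin s) (Fin s) ℝ) - At) ^ p * E) := by rw [hEeq]
      _ = Eᵀ * (((1 : Matrix (Fin s) (Fin s) ℝ) - At) ^ p *
            ((1 : Matrix (Fin s) (Fin s) ℝ) - At) ^ p) * E := by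
          rw [transpose_mul, hsymS]; simp only [Matrix.mul_assoc]
  -- vector form
  set v : Fin m → ℝ :=
    Pi.single j (Real.sqrt (d j)) - Pi.single ℓ (Real.sqrt (d ℓ)) with hv
  have hBv : B.mulVec v =
      Pi.single (idx j) (Real.sqrt (d j)) - Pi.single (idx ℓ) (Real.sqrt (d ℓ)) := by
    rw [hv, Matrix.mulVec_sub, Matrix.mulVec_single, Matrix.mulVec_single]
    funext a
    simp only [Pi.sub_apply, Pi.single_apply, hB, Matrix.of_apply]
    by_cases h1 : a = idx j <;> by_cases h2 : a = idx ℓ <;> simp [h1, h2]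
  have hEv : E.mulVec v =
      Pi.single (Fin.castLE hms j) (Real.sqrt (d j)) -
        Pi.single (Fin.castLE hms ℓ) (Real.sqrt (d ℓ)) := by
    rw [hv, Matrix.mulVec_sub, Matrix.mulVec_single, Matrix.mulVec_single]
    funext a
    have e1 : (a = Fin.castLE hms j) ↔ ((a : ℕ) = (j : ℕ)) := by
      rw [Fin.ext_iff]; simp
    have e2 : (a = Fin.castLE hms ℓ) ↔ ((a : ℕ) = (ℓ : ℕ)) := by
      rw [Fin.ext_iff]; simp
    simp only [Pi.sub_apply, Pi.single_apply, hE, Matrix.of_apply, e1, e2]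
    by_cases h1 : (a : ℕ) = (j : ℕ) <;> by_cases h2 : (a : ℕ) = (ℓ : ℕ) <;>
      simp [h1, h2]
  have quad : ∀ {n : ℕ} (X : Matrix (Fin n) (Fin m) ℝ)
      (M : Matrix (Fin n) (Fin n) ℝ) (w : Fin m → ℝ),
      (X.mulVec w) ⬝ᵥ M.mulVec (X.mulVec w) = w ⬝ᵥ (Xᵀ * M * X).mulVec w := by
    intro n X M w
    have h1 : (Xᵀ * M * X).mulVec w = Xᵀ.mulVec (M.mulVec (X.mulVec w)) := by
      rw [Matrix.mulVec_mulVec, Matrix.mulVec_mulVec, Matrix.mul_assoc]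
    rw [h1, Matrix.dotProduct_mulVec w Xᵀ, Matrix.vecMul_transpose]
  rw [← hBv, ← hEv, quad, quad, hBMB]
end

section
/- Let A ∈ ℝ^{N×N} be symmetric positive definite, let i₁ < … < i_m be indices and B = [e_{i₁},…,e_{i_m}] ∈ ℝ^{N×m}. Let Q ∈ ℝ^{N×s} have orthonormal columns with Qᵀ B = E₁ (the first m columns of the s×s identity) and suppose the column span of Q contains the columns of B and of A^{−1} B. Set Ã = Qᵀ A Q. Then Ã is positive definite and for all positive reals d₁,…,d_m and all j, ℓ ∈ {1,…,m}: (e_{i_j}/√d_j − e_{i_ℓ}/√d_ℓ)ᵀ A^{−1} (e_{i_j}/√d_j − e_{i_ℓ}/√d_ℓ) = (e_j/√d_j − e_ℓ/√d_ℓ)ᵀ Ã^{−1} (e_j/√d_j − e_ℓ/√d_ℓ). -/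
/-!
Since `A⁻¹ B = Q C` lies in the range of `Q` and `Qᵀ Q = 1`, the Galerkin system for the
compression `Ã = Qᵀ A Q` is solved exactly: `Ã (Qᵀ A⁻¹ B) = Qᵀ A Q C = Qᵀ B`. Hence
`(Qᵀ B)ᵀ Ã⁻¹ (Qᵀ B) = Bᵀ Q Qᵀ Q C = Bᵀ A⁻¹ B`, and each commute-time quadratic form is this
identity evaluated at a combination `x` of two standard basis vectors, which `B` and `Qᵀ B = E₁`
send to the corresponding vectors in `ℝᴺ` and `ℝˢ`.
-/

open Matrix

namespace Matrix

variable {R : Type*} {n k ι κ : Type*} [Fintype n] [Fintype k]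

lemma mulVec_injective_of_transpose_mul_self_eq_one [CommSemiring R] [DecidableEq k]
    {Q : Matrix n k R} (hQ : Qᵀ * Q = 1) : Function.Injective Q.mulVec :=
  Function.LeftInverse.injective (g := Qᵀ.mulVec) fun x => by
    rw [mulVec_mulVec, hQ, one_mulVec]

lemma mulVec_dotProduct_mulVec_mulVec [CommSemiring R] (X : Matrix n k R) (M : Matrix n n R)
    (x : k → R) : X *ᵥ x ⬝ᵥ M *ᵥ (X *ᵥ x) = x ⬝ᵥ (Xᵀ * M * X) *ᵥ x := by
  rw [← mulVec_mulVec, ← mulVec_mulVec, dotProduct_mulVec x, vecMul_transpose]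

lemma of_ite_eq_mulVec_single [CommSemiring R] [Fintype κ] [DecidableEq ι] [DecidableEq κ]
    (f : κ → ι) (j : κ) (c : R) :
    (of fun a b => if a = f b then (1 : R) else 0) *ᵥ Pi.single j c = Pi.single (f j) c := by
  ext a
  simp [Pi.single_apply]

section Galerkin

variable [CommRing R] [DecidableEq n] [DecidableEq k] {A : Matrix n n R} {Q : Matrix n k R}
  {B : Matrix n κ R}

lemma inv_transpose_mul_mul_mul_transpose_mul (hQ : Qᵀ * Q = 1) (hA : IsUnit A.det)
    (hAQ : IsUnit (Qᵀ * A * Q).det) (hAB : ∃ C : Matrix k κ R, A⁻¹ * B = Q * C) :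
    (Qᵀ * A * Q)⁻¹ * (Qᵀ * B) = Qᵀ * (A⁻¹ * B) := by
  obtain ⟨C, hC⟩ := hAB
  have hGalerkin : Qᵀ * A * Q * (Qᵀ * (A⁻¹ * B)) = Qᵀ * B := calc
    Qᵀ * A * Q * (Qᵀ * (A⁻¹ * B)) = Qᵀ * A * (Q * C) := by
      rw [hC, ← Matrix.mul_assoc Qᵀ Q C, hQ, Matrix.one_mul, Matrix.mul_assoc _ Q C]
    _ = Qᵀ * B := by
      rw [← hC, Matrix.mul_assoc, mul_nonsing_inv_cancel_left _ _ hA]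
  rw [← hGalerkin, nonsing_inv_mul_cancel_left _ _ hAQ]

lemma transpose_mul_inv_transpose_mul_mul_mul (hQ : Qᵀ * Q = 1) (hA : IsUnit A.det)
    (hAQ : IsUnit (Qᵀ * A * Q).det) (hAB : ∃ C : Matrix k κ R, A⁻¹ * B = Q * C) :
    (Qᵀ * B)ᵀ * (Qᵀ * A * Q)⁻¹ * (Qᵀ * B) = Bᵀ * A⁻¹ * B := by
  obtain ⟨C, hC⟩ := hAB
  calc (Qᵀ * B)ᵀ * (Qᵀ * A * Q)⁻¹ * (Qᵀ * B) = Bᵀ * (Q * (Qᵀ * (Q * C))) := by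
        rw [Matrix.mul_assoc, inv_transpose_mul_mul_mul_transpose_mul hQ hA hAQ ⟨C, hC⟩, hC,
          transpose_mul, transpose_transpose, Matrix.mul_assoc]
    _ = Bᵀ * A⁻¹ * B := by rw [← Matrix.mul_assoc Qᵀ, hQ, Matrix.one_mul, ← hC, Matrix.mul_assoc]

end Galerkin

end Matrix

theorem commute_time_distance_preservation_general {N m s : ℕ} (hms : m ≤ s)
    (A : Matrix (Fin N) (Fin N) ℝ) (hA : A.PosDef)
    (idx : Fin m → Fin N)
    (Q : Matrix (Fin N) (Fin s) ℝ) (hQ : Qᵀ * Q = 1)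
    (hQB : Qᵀ * (Matrix.of fun a b => if a = idx b then (1 : ℝ) else 0) =
      Matrix.of fun (a : Fin s) (b : Fin m) => if (a : ℕ) = (b : ℕ) then 1 else 0)
    (hAinvB : ∃ C : Matrix (Fin s) (Fin m) ℝ,
      A⁻¹ * (Matrix.of fun a b => if a = idx b then (1 : ℝ) else 0) = Q * C) :
    (Qᵀ * A * Q).PosDef ∧
      ∀ d : Fin m → ℝ, (∀ b, 0 < d b) → ∀ j ℓ : Fin m,
        (Pi.single (idx j) ((Real.sqrt (d j))⁻¹) -
            Pi.single (idx ℓ) ((Real.sqrt (d ℓ))⁻¹)) ⬝ᵥ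
          (A⁻¹).mulVec
            (Pi.single (idx j) ((Real.sqrt (d j))⁻¹) -
              Pi.single (idx ℓ) ((Real.sqrt (d ℓ))⁻¹)) =
        (Pi.single (Fin.castLE hms j) ((Real.sqrt (d j))⁻¹) -
            Pi.single (Fin.castLE hms ℓ) ((Real.sqrt (d ℓ))⁻¹)) ⬝ᵥ
          ((Qᵀ * A * Q)⁻¹).mulVec
            (Pi.single (Fin.castLE hms j) ((Real.sqrt (d j))⁻¹) -
              Pi.single (Fin.castLE hms ℓ) ((Real.sqrt (d ℓ))⁻¹)) := by
  set B : Matrix (Fin N) (Fin m) ℝ := of fun a b => if a = idx b then (1 : ℝ) else 0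
  have hAQ : (Qᵀ * A * Q).PosDef :=
    hA.conjTranspose_mul_mul_same (mulVec_injective_of_transpose_mul_self_eq_one hQ)
  refine ⟨hAQ, fun d _ j ℓ => ?_⟩
  set x : Fin m → ℝ := Pi.single j (√(d j))⁻¹ - Pi.single ℓ (√(d ℓ))⁻¹
  have hBx : Pi.single (idx j) (√(d j))⁻¹ - Pi.single (idx ℓ) (√(d ℓ))⁻¹ = B *ᵥ x := by
    simp only [x, B, mulVec_sub, of_ite_eq_mulVec_single]
  have hQBx : Pi.single (Fin.castLE hms j) (√(d j))⁻¹ - Pi.single (Fin.castLE hms ℓ) (√(d ℓ))⁻¹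
      = (Qᵀ * B) *ᵥ x := by
    have hE : Qᵀ * B = of fun a b => if a = Fin.castLE hms b then (1 : ℝ) else 0 := by
      rw [hQB]; simp only [Fin.ext_iff, Fin.val_castLE]
    simp only [x, hE, mulVec_sub, of_ite_eq_mulVec_single]
  rw [hBx, hQBx, mulVec_dotProduct_mulVec_mulVec, mulVec_dotProduct_mulVec_mulVec,
    transpose_mul_inv_transpose_mul_mul_mul hQ ((isUnit_iff_isUnit_det _).mp hA.isUnit)
      ((isUnit_iff_isUnit_det _).mp hAQ.isUnit) hAinvB]

/-- Exact preservation of commute-time distances (Proposition 3.3): if the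
column span of `Q` contains the columns of `B` and of `A⁻¹ B`, `Qᵀ B = E₁`, and
`A` is positive definite, then `Ã = Qᵀ A Q` is positive definite and the
commute-time quadratic forms between target-subset vertices are preserved. -/
theorem commute_time_distance_preservation {N m s : ℕ} (hms : m ≤ s)
    (A : Matrix (Fin N) (Fin N) ℝ) (hA : A.PosDef)
    (idx : Fin m → Fin N) (hidx : StrictMono idx)
    (Q : Matrix (Fin N) (Fin s) ℝ) (hQ : Qᵀ * Q = 1)
    (hQB : Qᵀ * (Matrix.of fun a b => if a = idx b then (1 : ℝ) else 0) =
      Matrix.of fun (a : Fin s) (b : Fin m) => if (a : ℕ) = (b : ℕ) then 1 else 0)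
    (hB : ∃ C : Matrix (Fin s) (Fin m) ℝ,
      (Matrix.of fun a b => if a = idx b then (1 : ℝ) else 0) = Q * C)
    (hAinvB : ∃ C : Matrix (Fin s) (Fin m) ℝ,
      A⁻¹ * (Matrix.of fun a b => if a = idx b then (1 : ℝ) else 0) = Q * C) :
    (Qᵀ * A * Q).PosDef ∧
      ∀ d : Fin m → ℝ, (∀ b, 0 < d b) → ∀ j ℓ : Fin m,
        (Pi.single (idx j) ((Real.sqrt (d j))⁻¹) -
            Pi.single (idx ℓ) ((Real.sqrt (d ℓ))⁻¹)) ⬝ᵥ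
          (A⁻¹).mulVec
            (Pi.single (idx j) ((Real.sqrt (d j))⁻¹) -
              Pi.single (idx ℓ) ((Real.sqrt (d ℓ))⁻¹)) =
        (Pi.single (Fin.castLE hms j) ((Real.sqrt (d j))⁻¹) -
            Pi.single (Fin.castLE hms ℓ) ((Real.sqrt (d ℓ))⁻¹)) ⬝ᵥ
          ((Qᵀ * A * Q)⁻¹).mulVec
            (Pi.single (Fin.castLE hms j) ((Real.sqrt (d j))⁻¹) -
              Pi.single (Fin.castLE hms ℓ) ((Real.sqrt (d ℓ))⁻¹)) :=
  commute_time_distance_preservation_general hms A hA idx Q hQ hQB hAinvB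
end
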